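/- Let q > 1 be real, λ = q − q^{−1}, and let α, β ∈ ℂ satisfy α β̄ = ᾱ β. Then for every complex-valued function f and every real x ≠ 0, the Hamilton operator H = a⁺ a takes the explicit form (a⁺(a f))(x) = |α|² f(x) − |β|² (D_q(D_q f))(x) − i α β̄ ( q^{−1/2} (D_q f)(q^{−1} x) + q^{3/2} (D_q f)(q x) ). -/

import Mathlib

/-! `D_q` is linear and intertwines dilations, `D_q (f (c ·)) x = c · (D_q f)(c x)`, so `D_q (a f)`
is explicit in `D_q f` and `D_q² f`, and `a⁺ (a f)` becomes an identity between multiples of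
`f x`, `(D_q f)(q^{±1} x)` and `D_q² f x` once every `q^{k/2}` is written as a power of
`s = q^{1/2}`. The two cross terms `ᾱ β` and `α β̄` merge by the hypothesis `α β̄ = ᾱ β`, and
`(-i)² = -1` turns `|β|² s⁻² q` into the coefficient `-|β|²` of `D_q² f`. -/

/-- The q-derivative `(D_q f)(x) = (f(qx) - f(q⁻¹x)) / (x(q - q⁻¹))`. -/
noncomputable def Dq (q : ℝ) (f : ℝ → ℂ) (x : ℝ) : ℂ :=
  (f (q * x) - f (q⁻¹ * x)) / ((x : ℂ) * ((q : ℂ) - (q : ℂ)⁻¹))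

/-- The annihilation operator `a = α U⁻² + β U⁻¹ P` of the q-oscillator realized
on the quantum line: `(a f)(x) = α q f(q²x) - i β q^{1/2} (D_q f)(qx)`. -/
noncomputable def aOp (q : ℝ) (α β : ℂ) (f : ℝ → ℂ) (x : ℝ) : ℂ :=
  α * (q : ℂ) * f (q ^ 2 * x) -
    Complex.I * β * ((q ^ ((1 : ℝ) / 2) : ℝ) : ℂ) * Dq q f (q * x)

/-- The creation operator `a⁺ = ᾱ U² + β̄ P U` of the q-oscillator realized
on the quantum line: `(a⁺ f)(x) = ᾱ q⁻¹ f(q⁻²x) - i β̄ q^{-3/2} (D_q f)(q⁻¹x)`. -/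
noncomputable def aPlusOp (q : ℝ) (α β : ℂ) (f : ℝ → ℂ) (x : ℝ) : ℂ :=
  (starRingEnd ℂ) α * (q : ℂ)⁻¹ * f (q⁻¹ ^ 2 * x) -
    Complex.I * (starRingEnd ℂ) β * ((q ^ (-(3 : ℝ) / 2) : ℝ) : ℂ) * Dq q f (q⁻¹ * x)

namespace Dq

variable {q : ℝ}

theorem const_mul (c : ℂ) (f : ℝ → ℂ) (x : ℝ) :
    Dq q (fun y => c * f y) x = c * Dq q f x := by
  simp only [Dq]; ring

theorem sub (f g : ℝ → ℂ) (x : ℝ) :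
    Dq q (fun y => f y - g y) x = Dq q f x - Dq q g x := by
  simp only [Dq]; ring

/-- No hypothesis `c ≠ 0`: for `c = 0` both sides are `0`, the left one because `D_q` of a
constant is `0`. -/
theorem comp_const_mul (c : ℝ) (f : ℝ → ℂ) (x : ℝ) :
    Dq q (fun y => f (c * y)) x = c * Dq q f (c * x) := by
  rcases eq_or_ne c 0 with rfl | hc
  · simp [Dq]
  · have hc' : (c : ℂ) ≠ 0 := by exact_mod_cast hc
    simp only [Dq, mul_left_comm c]
    push_cast
    field_simp

end Dq

theorem Dq_aOp (q : ℝ) (α β : ℂ) (f : ℝ → ℂ) (x : ℝ) :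
    Dq q (aOp q α β f) x =
      α * (q : ℂ) ^ 3 * Dq q f (q ^ 2 * x) -
        Complex.I * β * ((q ^ ((1 : ℝ) / 2) : ℝ) : ℂ) * q * Dq q (Dq q f) (q * x) := by
  unfold aOp
  rw [Dq.sub, Dq.const_mul, Dq.const_mul, Dq.comp_const_mul, Dq.comp_const_mul]
  push_cast
  ring

theorem aOp_apply_inv_sq_mul {q : ℝ} (hq : q ≠ 0) (α β : ℂ) (f : ℝ → ℂ) (x : ℝ) :
    aOp q α β f (q⁻¹ ^ 2 * x) =
      α * q * f x - Complex.I * β * ((q ^ ((1 : ℝ) / 2) : ℝ) : ℂ) * Dq q f (q⁻¹ * x) := by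
  unfold aOp
  congr 3 <;> field_simp

/-- The Hamilton operator `H = a⁺ a` takes the explicit form
`H f = |α|² f - |β|² D_q² f - i α β̄ (U + q U⁻¹) D_q f`, i.e. pointwise
`(a⁺(a f))(x) = |α|² f(x) - |β|² (D_q(D_q f))(x)
  - i α β̄ (q^{-1/2} (D_q f)(q⁻¹x) + q^{3/2} (D_q f)(qx))`. -/
theorem hamiltonian_explicit (q : ℝ) (hq : 1 < q) (α β : ℂ)
    (hαβ : α * (starRingEnd ℂ) β = (starRingEnd ℂ) α * β) :
    ∀ (f : ℝ → ℂ) (x : ℝ), x ≠ 0 →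
      aPlusOp q α β (aOp q α β f) x =
        (Complex.normSq α : ℂ) * f x - (Complex.normSq β : ℂ) * Dq q (Dq q f) x -
          Complex.I * α * (starRingEnd ℂ) β *
            (((q ^ (-(1 : ℝ) / 2) : ℝ) : ℂ) * Dq q f (q⁻¹ * x) +
              ((q ^ ((3 : ℝ) / 2) : ℝ) : ℂ) * Dq q f (q * x)) := by
  intro f x _
  have hq0 : 0 < q := by linarith
  obtain ⟨s, hs_def⟩ : ∃ s, s = q ^ ((1 : ℝ) / 2) := ⟨_, rfl⟩
  have hs : 0 < s := hs_def ▸ Real.rpow_pos_of_pos hq0 _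
  have hsq : s ^ 2 = q := by
    rw [hs_def, ← Real.rpow_natCast, ← Real.rpow_mul hq0.le]; norm_num
  have h3 : q ^ ((3 : ℝ) / 2) = s ^ 3 := by
    rw [hs_def, ← Real.rpow_natCast, ← Real.rpow_mul hq0.le]; norm_num
  have hm1 : q ^ (-(1 : ℝ) / 2) = s⁻¹ := by
    rw [neg_div, Real.rpow_neg hq0.le, hs_def]
  have hm3 : q ^ (-(3 : ℝ) / 2) = (s ^ 3)⁻¹ := by
    rw [neg_div, Real.rpow_neg hq0.le, h3]
  have hx1 : q ^ 2 * (q⁻¹ * x) = q * x := by field_simp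
  have hx2 : q * (q⁻¹ * x) = x := by field_simp
  unfold aPlusOp
  rw [aOp_apply_inv_sq_mul hq0.ne', Dq_aOp, hx1, hx2, ← hs_def, h3, hm1, hm3,
    Complex.normSq_eq_conj_mul_self, Complex.normSq_eq_conj_mul_self]
  subst hsq
  push_cast
  have hsC : (s : ℂ) ≠ 0 := by exact_mod_cast hs.ne'
  field_simp
  linear_combination Complex.I * Dq (s ^ 2) f (x / s ^ 2) * hαβ +
    s * β * (starRingEnd ℂ) β * Dq (s ^ 2) (Dq (s ^ 2) f) x * Complex.I_sq
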